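/- For closed convex cones P, Q in ℝⁿ and 1 ≤ r ≤ ∞, the quantity Dis_r(P,Q) := dis_r(P∩Sₙ, Q∩Sₙ) is a metric on the set of closed convex cones, and it admits the formula Dis_r(P,Q) = 2 ‖( sin(Θ(P,Q)/2), sin(Θ(Q,P)/2) )‖_r. -/
import Mathlib

open Real Set
open scoped ENNReal

noncomputable section

local notation "⟪" x ", " y "⟫" => @inner ℝ _ _ x y

/-- Euclidean space ℝⁿ. -/
abbrev E (n : ℕ) := EuclideanSpace ℝ (Fin n)

/-- Unit sphere Sₙ in ℝⁿ. -/
def sph (n : ℕ) : Set (E n) := {u | ‖u‖ = 1}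

/-- `P` is a closed convex cone in ℝⁿ. -/
def IsClosedConvexCone {n : ℕ} (P : Set (E n)) : Prop :=
  IsClosed P ∧ Convex ℝ P ∧ ∀ c : ℝ, 0 ≤ c → ∀ x ∈ P, c • x ∈ P

/-- inner minimum: min_{v ∈ Q∩Sₙ} arccos ⟨u,v⟩. -/
def innerMin {n : ℕ} (Q : Set (E n)) (u : E n) : ℝ :=
  sInf ((fun v => Real.arccos ⟪u, v⟫) '' (Q ∩ sph n))

/-- max-min angle Θ(P,Q) = max_{u ∈ P∩Sₙ} min_{v ∈ Q∩Sₙ} arccos ⟨u,v⟩. -/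
def theta {n : ℕ} (P Q : Set (E n)) : ℝ :=
  sSup (innerMin Q '' (P ∩ sph n))

/-- One-sided Hausdorff excess Λ(C,D) = max_{x ∈ C} min_{y ∈ D} ‖x − y‖. -/
def Lam {n : ℕ} (C D : Set (E n)) : ℝ :=
  sSup ((fun x => sInf ((fun y => ‖x - y‖) '' D)) '' C)

/-- ℓʳ-norm of the pair (a,b) ∈ ℝ², for r ∈ [1,∞]. -/
def lnorm (r : ℝ≥0∞) (a b : ℝ) : ℝ :=
  if r = ⊤ then max |a| |b| else (|a| ^ r.toReal + |b| ^ r.toReal) ^ (1 / r.toReal)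

/-- dis_r(C,D) = ‖(Λ(C,D), Λ(D,C))‖_r. -/
def dis {n : ℕ} (r : ℝ≥0∞) (C D : Set (E n)) : ℝ := lnorm r (Lam C D) (Lam D C)

/-- Dis_r(P,Q) = dis_r(P∩Sₙ, Q∩Sₙ). -/
def Dis {n : ℕ} (r : ℝ≥0∞) (P Q : Set (E n)) : ℝ := dis r (P ∩ sph n) (Q ∩ sph n)

/-! ### auxiliary lemmas -/

section Aux

variable {n : ℕ}

lemma sph_eq (n : ℕ) : sph n = Metric.sphere (0 : E n) 1 := by
  ext x; simp [sph, mem_sphere_zero_iff_norm]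

lemma isCompact_inter_sph {P : Set (E n)} (hP : IsClosed P) : IsCompact (P ∩ sph n) := by
  rw [sph_eq]
  exact (isCompact_sphere (0 : E n) 1).inter_left hP

lemma norm_eq_one_of_mem_sph {x : E n} (hx : x ∈ sph n) : ‖x‖ = 1 := hx

lemma sInf_norm_eq_infDist (x : E n) (D : Set (E n)) :
    sInf ((fun y => ‖x - y‖) '' D) = Metric.infDist x D := by
  rw [Metric.infDist_eq_iInf, iInf, Set.image_eq_range]
  simp [dist_eq_norm]

lemma Lam_eq (C D : Set (E n)) :
    Lam C D = sSup ((fun x => Metric.infDist x D) '' C) := by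
  unfold Lam
  congr 1
  apply Set.image_congr
  intro x _
  exact sInf_norm_eq_infDist x D

lemma infDist_le_two {x : E n} (hx : x ∈ sph n) {D : Set (E n)} (hD : D ⊆ sph n)
    (hDne : D.Nonempty) : Metric.infDist x D ≤ 2 := by
  obtain ⟨y, hy⟩ := hDne
  refine (Metric.infDist_le_dist_of_mem hy).trans ?_
  rw [dist_eq_norm]
  calc ‖x - y‖ ≤ ‖x‖ + ‖y‖ := norm_sub_le x y
  _ = 2 := by rw [norm_eq_one_of_mem_sph hx, norm_eq_one_of_mem_sph (hD hy)]; norm_num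

lemma bddAbove_infDist_img {C D : Set (E n)} (hC : C ⊆ sph n) (hD : D ⊆ sph n)
    (hDne : D.Nonempty) : BddAbove ((fun x => Metric.infDist x D) '' C) := by
  refine ⟨2, ?_⟩
  rintro _ ⟨x, hx, rfl⟩
  exact infDist_le_two (hC hx) hD hDne

lemma infDist_le_Lam {C D : Set (E n)} (hC : C ⊆ sph n) (hD : D ⊆ sph n)
    (hDne : D.Nonempty) {x : E n} (hx : x ∈ C) : Metric.infDist x D ≤ Lam C D := by
  rw [Lam_eq]
  exact le_csSup (bddAbove_infDist_img hC hD hDne) ⟨x, hx, rfl⟩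

lemma Lam_nonneg {C D : Set (E n)} (hC : C ⊆ sph n) (hD : D ⊆ sph n)
    (hCne : C.Nonempty) (hDne : D.Nonempty) : 0 ≤ Lam C D := by
  obtain ⟨x, hx⟩ := hCne
  exact le_trans Metric.infDist_nonneg (infDist_le_Lam hC hD hDne hx)

lemma Lam_le {C D : Set (E n)} {a : ℝ} (ha : 0 ≤ a)
    (h : ∀ x ∈ C, Metric.infDist x D ≤ a) : Lam C D ≤ a := by
  rw [Lam_eq]
  refine Real.sSup_le ?_ ha
  rintro _ ⟨x, hx, rfl⟩
  exact h x hx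

lemma Lam_triangle {C D G : Set (E n)} (hC : C ⊆ sph n) (hD : D ⊆ sph n) (hG : G ⊆ sph n)
    (hCne : C.Nonempty) (hDne : D.Nonempty) (hGne : G.Nonempty) (hGcomp : IsCompact G) :
    Lam C D ≤ Lam C G + Lam G D := by
  refine Lam_le (add_nonneg (Lam_nonneg hC hG hCne hGne) (Lam_nonneg hG hD hGne hDne)) ?_
  intro x hx
  obtain ⟨z, hz, hzd⟩ := hGcomp.exists_infDist_eq_dist hGne x
  have h1 : Metric.infDist x D ≤ Metric.infDist z D + dist x z :=
    Metric.infDist_le_infDist_add_dist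
  have h2 : Metric.infDist z D ≤ Lam G D := infDist_le_Lam hG hD hDne hz
  have h3 : Metric.infDist x G ≤ Lam C G := infDist_le_Lam hC hG hGne hx
  linarith

lemma Lam_eq_zero_iff {C D : Set (E n)} (hC : C ⊆ sph n) (hD : D ⊆ sph n)
    (hCne : C.Nonempty) (hDne : D.Nonempty) (hDcl : IsClosed D) :
    Lam C D = 0 ↔ C ⊆ D := by
  constructor
  · intro h x hx
    have h1 : Metric.infDist x D ≤ 0 := h ▸ infDist_le_Lam hC hD hDne hx
    have h2 : Metric.infDist x D = 0 := le_antisymm h1 Metric.infDist_nonneg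
    exact (hDcl.mem_iff_infDist_zero hDne).mpr h2
  · intro h
    refine le_antisymm (Lam_le le_rfl ?_) (Lam_nonneg hC hD hCne hDne)
    intro x hx
    exact le_of_eq (Metric.infDist_zero_of_mem (h hx))

/-! ### lnorm lemmas -/

lemma toReal_ge_one {r : ℝ≥0∞} (hr : 1 ≤ r) (htop : r ≠ ⊤) : 1 ≤ r.toReal := by
  simpa using ENNReal.toReal_mono htop hr

lemma lnorm_nonneg (r : ℝ≥0∞) (a b : ℝ) : 0 ≤ lnorm r a b := by
  unfold lnorm
  split
  · exact le_trans (abs_nonneg a) (le_max_left _ _)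
  · exact Real.rpow_nonneg (add_nonneg (Real.rpow_nonneg (abs_nonneg a) _)
      (Real.rpow_nonneg (abs_nonneg b) _)) _

lemma lnorm_comm (r : ℝ≥0∞) (a b : ℝ) : lnorm r a b = lnorm r b a := by
  unfold lnorm
  split
  · exact max_comm _ _
  · rw [add_comm]

lemma lnorm_mono {r : ℝ≥0∞} {a b a' b' : ℝ} (ha : 0 ≤ a) (hb : 0 ≤ b)
    (haa : a ≤ a') (hbb : b ≤ b') : lnorm r a b ≤ lnorm r a' b' := by
  have ha' : 0 ≤ a' := ha.trans haa
  have hb' : 0 ≤ b' := hb.trans hbb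
  unfold lnorm
  rw [abs_of_nonneg ha, abs_of_nonneg hb, abs_of_nonneg ha', abs_of_nonneg hb']
  split
  · exact max_le_max haa hbb
  · refine Real.rpow_le_rpow (add_nonneg (Real.rpow_nonneg ha _) (Real.rpow_nonneg hb _))
      (add_le_add (Real.rpow_le_rpow ha haa ENNReal.toReal_nonneg)
        (Real.rpow_le_rpow hb hbb ENNReal.toReal_nonneg))
      (one_div_nonneg.mpr ENNReal.toReal_nonneg)

lemma lnorm_eq_zero_iff {r : ℝ≥0∞} (hr : 1 ≤ r) {a b : ℝ} (ha : 0 ≤ a) (hb : 0 ≤ b) :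
    lnorm r a b = 0 ↔ a = 0 ∧ b = 0 := by
  unfold lnorm
  rw [abs_of_nonneg ha, abs_of_nonneg hb]
  split_ifs with htop
  · constructor
    · intro h
      constructor
      · exact le_antisymm (h ▸ le_max_left a b) ha
      · exact le_antisymm (h ▸ le_max_right a b) hb
    · rintro ⟨rfl, rfl⟩; simp
  · have ht : 1 ≤ r.toReal := toReal_ge_one hr htop
    have ht0 : r.toReal ≠ 0 := by linarith
    rw [Real.rpow_eq_zero (add_nonneg (Real.rpow_nonneg ha _) (Real.rpow_nonneg hb _))
      (by simpa using ht0)]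
    rw [add_eq_zero_iff_of_nonneg (Real.rpow_nonneg ha _) (Real.rpow_nonneg hb _)]
    rw [Real.rpow_eq_zero ha ht0, Real.rpow_eq_zero hb ht0]

lemma lnorm_add_le {r : ℝ≥0∞} (hr : 1 ≤ r) {a b a' b' : ℝ}
    (ha : 0 ≤ a) (hb : 0 ≤ b) (ha' : 0 ≤ a') (hb' : 0 ≤ b') :
    lnorm r (a + a') (b + b') ≤ lnorm r a b + lnorm r a' b' := by
  unfold lnorm
  split_ifs with htop
  · rw [abs_of_nonneg ha, abs_of_nonneg hb, abs_of_nonneg ha', abs_of_nonneg hb',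
      abs_of_nonneg (add_nonneg ha ha'), abs_of_nonneg (add_nonneg hb hb')]
    refine max_le (add_le_add (le_max_left _ _) (le_max_left _ _))
      (add_le_add (le_max_right _ _) (le_max_right _ _))
  · have ht : 1 ≤ r.toReal := toReal_ge_one hr htop
    have := Real.Lp_add_le (Finset.univ : Finset (Fin 2)) ![a, b] ![a', b'] ht
    simpa [Fin.sum_univ_two] using this

lemma lnorm_two_mul {r : ℝ≥0∞} (hr : 1 ≤ r) {a b : ℝ} (ha : 0 ≤ a) (hb : 0 ≤ b) :
    lnorm r (2 * a) (2 * b) = 2 * lnorm r a b := by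
  unfold lnorm
  rw [abs_of_nonneg ha, abs_of_nonneg hb, abs_of_nonneg (by linarith : (0:ℝ) ≤ 2 * a),
    abs_of_nonneg (by linarith : (0:ℝ) ≤ 2 * b)]
  split_ifs with htop
  · rcases le_total a b with h | h
    · rw [max_eq_right h, max_eq_right (by linarith)]
    · rw [max_eq_left h, max_eq_left (by linarith)]
  · have ht : 1 ≤ r.toReal := toReal_ge_one hr htop
    have ht0 : r.toReal ≠ 0 := by linarith
    set t := r.toReal
    have h2 : (0:ℝ) ≤ 2 := by norm_num
    rw [Real.mul_rpow h2 ha, Real.mul_rpow h2 hb, ← mul_add,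
      Real.mul_rpow (Real.rpow_nonneg h2 t)
        (add_nonneg (Real.rpow_nonneg ha t) (Real.rpow_nonneg hb t)),
      ← Real.rpow_mul h2, mul_one_div_cancel ht0, Real.rpow_one]

/-! ### geometry : chord length and angles -/

lemma sin_half_mono {a b : ℝ} (ha : 0 ≤ a) (hab : a ≤ b) (hb : b ≤ π) :
    Real.sin (a / 2) ≤ Real.sin (b / 2) := by
  have hpi : (0:ℝ) < π := Real.pi_pos
  refine Real.strictMonoOn_sin.monotoneOn ?_ ?_ (by linarith)
  · constructor <;> [linarith; linarith]
  · constructor <;> [linarith; linarith]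

lemma sin_half_le_rev {a b : ℝ} (ha : 0 ≤ a) (hb : 0 ≤ b) (hapi : a ≤ π) (hbpi : b ≤ π)
    (h : Real.sin (a / 2) ≤ Real.sin (b / 2)) : a ≤ b := by
  by_contra hab
  push_neg at hab
  have : Real.sin (b / 2) < Real.sin (a / 2) := by
    have hpi : (0:ℝ) < π := Real.pi_pos
    refine Real.strictMonoOn_sin ?_ ?_ (by linarith)
    · constructor <;> [linarith; linarith]
    · constructor <;> [linarith; linarith]
  linarith

lemma norm_sub_unit {u v : E n} (hu : ‖u‖ = 1) (hv : ‖v‖ = 1) :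
    ‖u - v‖ = 2 * Real.sin (Real.arccos ⟪u, v⟫ / 2) := by
  have habs : |(⟪u, v⟫ : ℝ)| ≤ 1 := by
    have := abs_real_inner_le_norm u v
    rwa [hu, hv, mul_one] at this
  rw [abs_le] at habs
  have hsin : 0 ≤ Real.sin (Real.arccos ⟪u, v⟫ / 2) := by
    apply Real.sin_nonneg_of_nonneg_of_le_pi
    · linarith [Real.arccos_nonneg (⟪u, v⟫ : ℝ)]
    · linarith [Real.arccos_le_pi (⟪u, v⟫ : ℝ), Real.pi_pos]
  have hsq : ‖u - v‖ ^ 2 = (2 * Real.sin (Real.arccos ⟪u, v⟫ / 2)) ^ 2 := by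
    rw [norm_sub_sq_real, hu, hv]
    rw [mul_pow, Real.sin_sq_eq_half_sub]
    rw [show 2 * (Real.arccos ⟪u, v⟫ / 2) = Real.arccos ⟪u, v⟫ by ring]
    rw [Real.cos_arccos habs.1 habs.2]
    ring
  calc ‖u - v‖ = Real.sqrt (‖u - v‖ ^ 2) := (Real.sqrt_sq (norm_nonneg _)).symm
  _ = Real.sqrt ((2 * Real.sin (Real.arccos ⟪u, v⟫ / 2)) ^ 2) := by rw [hsq]
  _ = 2 * Real.sin (Real.arccos ⟪u, v⟫ / 2) := Real.sqrt_sq (by linarith)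

lemma innerMin_isLeast {Q : Set (E n)} (hQ : IsClosed Q) (hQne : (Q ∩ sph n).Nonempty)
    (u : E n) : ∃ v₀ ∈ Q ∩ sph n, innerMin Q u = Real.arccos ⟪u, v₀⟫ ∧
      ∀ v ∈ Q ∩ sph n, Real.arccos ⟪u, v₀⟫ ≤ Real.arccos ⟪u, v⟫ := by
  have hcomp := isCompact_inter_sph (n := n) hQ
  have hcont : ContinuousOn (fun v : E n => Real.arccos ⟪u, v⟫) (Q ∩ sph n) :=
    (Real.continuous_arccos.comp (continuous_const.inner continuous_id)).continuousOn
  obtain ⟨v₀, hv₀, hmin⟩ := hcomp.exists_isMinOn hQne hcont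
  refine ⟨v₀, hv₀, ?_, fun v hv => hmin hv⟩
  have : IsLeast ((fun v => Real.arccos ⟪u, v⟫) '' (Q ∩ sph n)) (Real.arccos ⟪u, v₀⟫) := by
    constructor
    · exact ⟨v₀, hv₀, rfl⟩
    · rintro _ ⟨v, hv, rfl⟩; exact hmin hv
  exact this.csInf_eq

lemma innerMin_mem_Icc {Q : Set (E n)} (hQ : IsClosed Q) (hQne : (Q ∩ sph n).Nonempty)
    (u : E n) : innerMin Q u ∈ Icc 0 π := by
  obtain ⟨v₀, _, heq, _⟩ := innerMin_isLeast hQ hQne u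
  rw [heq]
  exact ⟨Real.arccos_nonneg _, Real.arccos_le_pi _⟩

lemma infDist_eq_sin_innerMin {Q : Set (E n)} (hQ : IsClosed Q)
    (hQne : (Q ∩ sph n).Nonempty) {u : E n} (hu : u ∈ sph n) :
    Metric.infDist u (Q ∩ sph n) = 2 * Real.sin (innerMin Q u / 2) := by
  obtain ⟨v₀, hv₀, heq, hmin⟩ := innerMin_isLeast hQ hQne u
  rw [← sInf_norm_eq_infDist, heq]
  have hleast : IsLeast ((fun y => ‖u - y‖) '' (Q ∩ sph n)) (‖u - v₀‖) := by
    constructor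
    · exact ⟨v₀, hv₀, rfl⟩
    · rintro _ ⟨v, hv, rfl⟩
      dsimp only
      rw [norm_sub_unit hu hv₀.2, norm_sub_unit hu hv.2]
      have h1 := Real.arccos_nonneg (⟪u, v₀⟫ : ℝ)
      have h2 := Real.arccos_le_pi (⟪u, v⟫ : ℝ)
      exact mul_le_mul_of_nonneg_left (sin_half_mono h1 (hmin v hv) h2) (by norm_num)
  rw [hleast.csInf_eq, norm_sub_unit hu hv₀.2]

lemma Lam_formula {P Q : Set (E n)} (hPcl : IsClosed P) (hQcl : IsClosed Q)
    (hPne : (P ∩ sph n).Nonempty) (hQne : (Q ∩ sph n).Nonempty) :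
    Lam (P ∩ sph n) (Q ∩ sph n) = 2 * Real.sin (theta P Q / 2) ∧ theta P Q ∈ Icc 0 π := by
  have hcomp := isCompact_inter_sph (n := n) hPcl
  have hcont : ContinuousOn (fun x : E n => Metric.infDist x (Q ∩ sph n)) (P ∩ sph n) :=
    (Metric.continuous_infDist_pt _).continuousOn
  obtain ⟨u₀, hu₀, hmax⟩ := hcomp.exists_isMaxOn hPne hcont
  have hgr : IsGreatest ((fun x => Metric.infDist x (Q ∩ sph n)) '' (P ∩ sph n))
      (Metric.infDist u₀ (Q ∩ sph n)) := by
    constructor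
    · exact ⟨u₀, hu₀, rfl⟩
    · rintro _ ⟨x, hx, rfl⟩; exact hmax hx
  have hLam : Lam (P ∩ sph n) (Q ∩ sph n) = Metric.infDist u₀ (Q ∩ sph n) := by
    rw [Lam_eq]; exact hgr.csSup_eq
  have hth : IsGreatest (innerMin Q '' (P ∩ sph n)) (innerMin Q u₀) := by
    constructor
    · exact ⟨u₀, hu₀, rfl⟩
    · rintro _ ⟨x, hx, rfl⟩
      have h1 := innerMin_mem_Icc hQcl hQne x
      have h2 := innerMin_mem_Icc hQcl hQne u₀
      have hle : Metric.infDist x (Q ∩ sph n) ≤ Metric.infDist u₀ (Q ∩ sph n) := hmax hx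
      rw [infDist_eq_sin_innerMin hQcl hQne hx.2,
        infDist_eq_sin_innerMin hQcl hQne hu₀.2] at hle
      exact sin_half_le_rev h1.1 h2.1 h1.2 h2.2 (by linarith)
  have htheta : theta P Q = innerMin Q u₀ := hth.csSup_eq
  refine ⟨?_, ?_⟩
  · rw [hLam, htheta, infDist_eq_sin_innerMin hQcl hQne hu₀.2]
  · rw [htheta]; exact innerMin_mem_Icc hQcl hQne u₀

lemma cone_eq_of_inter_sph_eq {P Q : Set (E n)} (hP : IsClosedConvexCone P)
    (hQ : IsClosedConvexCone Q) (hPne : (P ∩ sph n).Nonempty) (hQne : (Q ∩ sph n).Nonempty)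
    (h : P ∩ sph n = Q ∩ sph n) : P = Q := by
  have key : ∀ (A B : Set (E n)), IsClosedConvexCone B → (B ∩ sph n).Nonempty →
      A ∩ sph n ⊆ B ∩ sph n → (∀ c : ℝ, 0 ≤ c → ∀ x ∈ A, c • x ∈ A) → A ⊆ B := by
    intro A B hB hBne hsub hAcone x hx
    by_cases hx0 : x = 0
    · obtain ⟨v, hv, _⟩ := hBne
      have := hB.2.2 0 le_rfl v hv
      simpa [hx0] using this
    · have hnx : ‖x‖ ≠ 0 := norm_ne_zero_iff.mpr hx0
      have hux : (‖x‖⁻¹ • x) ∈ A ∩ sph n := by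
        constructor
        · exact hAcone ‖x‖⁻¹ (inv_nonneg.mpr (norm_nonneg x)) x hx
        · show ‖‖x‖⁻¹ • x‖ = 1
          rw [norm_smul, norm_inv, norm_norm, inv_mul_cancel₀ hnx]
      have hB' := hsub hux
      have := hB.2.2 ‖x‖ (norm_nonneg x) _ hB'.1
      rwa [smul_smul, mul_inv_cancel₀ hnx, one_smul] at this
  apply Set.Subset.antisymm
  · exact key P Q hQ hQne (h ▸ Set.Subset.rfl) hP.2.2
  · exact key Q P hP hPne (h ▸ Set.Subset.rfl) hQ.2.2

end Aux

/-- Dis_r is a metric on the closed convex cones intersecting the unit sphere,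
and Dis_r(P,Q) = 2 ‖( sin(Θ(P,Q)/2), sin(Θ(Q,P)/2) )‖_r. -/
theorem Dis_metric_and_formula {n : ℕ} (r : ℝ≥0∞) (hr : 1 ≤ r)
    (P Q R : Set (E n))
    (hP : IsClosedConvexCone P) (hQ : IsClosedConvexCone Q) (hR : IsClosedConvexCone R)
    (hPne : (P ∩ sph n).Nonempty) (hQne : (Q ∩ sph n).Nonempty) (hRne : (R ∩ sph n).Nonempty) :
    0 ≤ Dis r P Q ∧
    Dis r P Q = Dis r Q P ∧
    (Dis r P Q = 0 ↔ P = Q) ∧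
    Dis r P Q ≤ Dis r P R + Dis r R Q ∧
    Dis r P Q = 2 * lnorm r (Real.sin (theta P Q / 2)) (Real.sin (theta Q P / 2)) := by
  set C := P ∩ sph n with hC
  set D := Q ∩ sph n with hD
  set G := R ∩ sph n with hG
  have hCs : C ⊆ sph n := Set.inter_subset_right
  have hDs : D ⊆ sph n := Set.inter_subset_right
  have hGs : G ⊆ sph n := Set.inter_subset_right
  have hCcl : IsClosed C := (isCompact_inter_sph hP.1).isClosed
  have hDcl : IsClosed D := (isCompact_inter_sph hQ.1).isClosed
  have hGcl : IsClosed G := (isCompact_inter_sph hR.1).isClosed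
  have hLCD : 0 ≤ Lam C D := Lam_nonneg hCs hDs hPne hQne
  have hLDC : 0 ≤ Lam D C := Lam_nonneg hDs hCs hQne hPne
  refine ⟨lnorm_nonneg r _ _, ?_, ?_, ?_, ?_⟩
  · exact lnorm_comm r _ _
  · -- zero iff
    rw [show Dis r P Q = lnorm r (Lam C D) (Lam D C) from rfl,
      lnorm_eq_zero_iff hr hLCD hLDC]
    constructor
    · rintro ⟨h1, h2⟩
      have hCD : C ⊆ D := (Lam_eq_zero_iff hCs hDs hPne hQne hDcl).mp h1
      have hDC : D ⊆ C := (Lam_eq_zero_iff hDs hCs hQne hPne hCcl).mp h2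
      exact cone_eq_of_inter_sph_eq hP hQ hPne hQne (Set.Subset.antisymm hCD hDC)
    · rintro rfl
      have hCD : C = D := by rw [hC, hD]
      constructor
      · exact (Lam_eq_zero_iff hCs hDs hPne hQne hDcl).mpr (hCD ▸ Set.Subset.rfl)
      · exact (Lam_eq_zero_iff hDs hCs hQne hPne hCcl).mpr (hCD ▸ Set.Subset.rfl)
  · -- triangle
    have t1 : Lam C D ≤ Lam C G + Lam G D := Lam_triangle hCs hDs hGs hPne hQne hRne (isCompact_inter_sph hR.1)
    have t2 : Lam D C ≤ Lam D G + Lam G C := Lam_triangle hDs hCs hGs hQne hPne hRne (isCompact_inter_sph hR.1)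
    calc Dis r P Q = lnorm r (Lam C D) (Lam D C) := rfl
    _ ≤ lnorm r (Lam C G + Lam G D) (Lam D G + Lam G C) := lnorm_mono hLCD hLDC t1 t2
    _ = lnorm r (Lam C G + Lam G D) (Lam G C + Lam D G) := by rw [add_comm (Lam D G)]
    _ ≤ lnorm r (Lam C G) (Lam G C) + lnorm r (Lam G D) (Lam D G) :=
        lnorm_add_le hr (Lam_nonneg hCs hGs hPne hRne) (Lam_nonneg hGs hCs hRne hPne)
          (Lam_nonneg hGs hDs hRne hQne) (Lam_nonneg hDs hGs hQne hRne)
    _ = Dis r P R + Dis r R Q := rfl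
  · -- formula
    obtain ⟨hf1, hth1⟩ := Lam_formula hP.1 hQ.1 hPne hQne
    obtain ⟨hf2, hth2⟩ := Lam_formula hQ.1 hP.1 hQne hPne
    have hs1 : 0 ≤ Real.sin (theta P Q / 2) := by
      apply Real.sin_nonneg_of_nonneg_of_le_pi
      · linarith [hth1.1]
      · linarith [hth1.2, Real.pi_pos]
    have hs2 : 0 ≤ Real.sin (theta Q P / 2) := by
      apply Real.sin_nonneg_of_nonneg_of_le_pi
      · linarith [hth2.1]
      · linarith [hth2.2, Real.pi_pos]
    calc Dis r P Q = lnorm r (Lam C D) (Lam D C) := rfl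
    _ = lnorm r (2 * Real.sin (theta P Q / 2)) (2 * Real.sin (theta Q P / 2)) := by
        rw [hC, hD, hf1, hf2]
    _ = 2 * lnorm r (Real.sin (theta P Q / 2)) (Real.sin (theta Q P / 2)) :=
        lnorm_two_mul hr hs1 hs2
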